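/- arXiv:2004.13347 — 7 statements merged into one kernel-verified Lean document; each statement's English description precedes it below -/
import Mathlib

section
/- Fix w ∈ ℝⁿ and β ∈ (0,1), and suppose L(w,·) is measurable and μ-integrable and the distribution function Φ(w,α) = μ{r : L(w,r) ≤ α} is continuous in α (equivalently, μ{r : L(w,r) = α} = 0 for every α). Then α ↦ F_β(w,α) is continuously differentiable on ℝ with derivative ∂F_β/∂α (w,α) = (Φ(w,α) − β)/(1 − β). -/
/-!
Pushing `μ` forward along `L w` reduces everything to a probability measure `ν` on `ℝ` with no
atoms. For each `x`, the map `a ↦ (x - a)⁺` is `1`-Lipschitz and, away from `a = x`, has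
derivative `-𝟙[a < x]`; since `ν {α} = 0`, dominated differentiation gives
`d/da ∫ (x - a)⁺ dν = -ν (Ioi α) = Φ(α) - 1`, hence `∂F_β/∂α = 1 + (Φ(α) - 1)/(1 - β)`.
Continuity of `Φ` is the absence of jumps of the CDF of an atomless measure.
-/

open MeasureTheory ProbabilityTheory Set

lemma lipschitzWith_max_sub_zero (x : ℝ) : LipschitzWith 1 (fun a : ℝ => max (x - a) 0) :=
  (IsometryEquiv.subLeft x).isometry.lipschitz.max_const 0

lemma hasDerivAt_max_sub_zero {x α : ℝ} (hx : x ≠ α) :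
    HasDerivAt (fun a : ℝ => max (x - a) 0) (-(Ioi α).indicator 1 x) α := by
  rcases hx.lt_or_gt with hlt | hgt
  · have hzero : (fun a : ℝ => max (x - a) 0) =ᶠ[nhds α] fun _ => 0 := by
      filter_upwards [eventually_gt_nhds hlt] with a ha
      exact max_eq_right (by linarith)
    simpa [indicator_of_notMem (notMem_Ioi.2 hlt.le)] using
      (hasDerivAt_const α (0 : ℝ)).congr_of_eventuallyEq hzero
  · have hlin : (fun a : ℝ => max (x - a) 0) =ᶠ[nhds α] fun a => x - a := by
      filter_upwards [eventually_lt_nhds hgt] with a ha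
      exact max_eq_left (by linarith)
    simpa [indicator_of_mem (mem_Ioi.2 hgt)] using
      ((hasDerivAt_id α).const_sub x).congr_of_eventuallyEq hlin

lemma hasDerivAt_integral_max_sub_zero {ν : Measure ℝ} [IsFiniteMeasure ν]
    (hν : Integrable id ν) {α : ℝ} (hα : ν {α} = 0) :
    HasDerivAt (fun a => ∫ x, max (x - a) 0 ∂ν) (-ν.real (Ioi α)) α := by
  have hne : ∀ᵐ x ∂ν, x ≠ α := measure_eq_zero_iff_ae_notMem.1 hα
  have key := hasDerivAt_integral_of_dominated_loc_of_lip (F := fun a x => max (x - a) 0)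
    (F' := fun x => -(Ioi α).indicator 1 x) (bound := fun _ => 1) Filter.univ_mem
    (.of_forall fun a => by fun_prop)
    ((hν.sub (integrable_const α)).pos_part)
    ((measurable_const.indicator measurableSet_Ioi).neg.aestronglyMeasurable)
    (.of_forall fun x => by simpa using (lipschitzWith_max_sub_zero x).lipschitzOnWith (s := univ))
    (integrable_const 1)
    (hne.mono fun x hx => hasDerivAt_max_sub_zero hx)
  simpa [integral_neg, integral_indicator_one measurableSet_Ioi] using key.2

lemma continuous_cdf (ν : Measure ℝ) [IsProbabilityMeasure ν] [NullSingletonClass ν] :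
    Continuous (cdf ν) := by
  refine continuous_iff_continuousAt.2 fun a => ?_
  have hjump : (cdf ν).measure {a} = 0 := by rw [measure_cdf]; exact measure_singleton a
  rw [StieltjesFunction.measure_singleton, ENNReal.ofReal_eq_zero, sub_nonpos] at hjump
  rw [(cdf ν).mono.continuousAt_iff_leftLim_eq_rightLim, (cdf ν).rightLim_eq]
  exact le_antisymm ((cdf ν).mono.leftLim_le le_rfl) hjump

theorem stmt_1_general {n : ℕ} (μ : Measure (Fin n → ℝ)) [IsProbabilityMeasure μ]
    (L : (Fin n → ℝ) → (Fin n → ℝ) → ℝ) (w : Fin n → ℝ) (β : ℝ)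
    (hβ : β ∈ Set.Ioo (0 : ℝ) 1)
    (hint : Integrable (L w) μ)
    (hcont : ∀ α : ℝ, μ {r | L w r = α} = 0) :
    (∀ α : ℝ,
      HasDerivAt (fun a : ℝ => a + (1 - β)⁻¹ * ∫ r, max (L w r - a) 0 ∂μ)
        (((μ {r | L w r ≤ α}).toReal - β) / (1 - β)) α) ∧
    Continuous (fun α : ℝ => ((μ {r | L w r ≤ α}).toReal - β) / (1 - β)) := by
  set ν := μ.map (L w)
  have hL := hint.aemeasurable
  have : IsProbabilityMeasure ν := Measure.isProbabilityMeasure_map hL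
  have hcdf (α : ℝ) : (μ {r | L w r ≤ α}).toReal = cdf ν α := by
    rw [cdf_eq_real, measureReal_def, Measure.map_apply_of_aemeasurable hL measurableSet_Iic]; rfl
  have : NullSingletonClass ν := ⟨fun α => by
    rw [Measure.map_apply_of_aemeasurable hL (measurableSet_singleton α)]; exact hcont α⟩
  have hν : Integrable id ν := (integrable_map_measure aestronglyMeasurable_id hL).2 hint
  have hintegral (a : ℝ) : ∫ r, max (L w r - a) 0 ∂μ = ∫ x, max (x - a) 0 ∂ν :=
    (integral_map hL (f := fun x => max (x - a) 0) (by fun_prop)).symm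
  simp_rw [hcdf, hintegral]
  refine ⟨fun α => ?_, ((continuous_cdf ν).sub continuous_const).div_const _⟩
  have hderiv := hasDerivAt_integral_max_sub_zero hν (measure_singleton α)
  rw [← compl_Iic, probReal_compl_eq_one_sub measurableSet_Iic, ← cdf_eq_real] at hderiv
  refine ((hasDerivAt_id α).add (hderiv.const_mul (1 - β)⁻¹)).congr_deriv ?_
  have : 1 - β ≠ 0 := by linarith [hβ.2]
  field_simp
  ring

/-- For fixed `w` and `β ∈ (0,1)`, if `L w` is measurable and integrable and the
distribution function `Φ(w,α) = μ {r | L w r ≤ α}` is continuous in `α` (equivalently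
`μ {r | L w r = α} = 0` for every `α`), then `α ↦ F_β(w,α)` is continuously differentiable
with derivative `(Φ(w,α) - β)/(1 - β)`. -/
theorem stmt_1 {n : ℕ} (μ : Measure (Fin n → ℝ)) [IsProbabilityMeasure μ]
    (L : (Fin n → ℝ) → (Fin n → ℝ) → ℝ) (w : Fin n → ℝ) (β : ℝ)
    (hβ : β ∈ Set.Ioo (0 : ℝ) 1)
    (hmeas : Measurable (L w)) (hint : Integrable (L w) μ)
    (hcont : ∀ α : ℝ, μ {r | L w r = α} = 0) :
    (∀ α : ℝ,
      HasDerivAt (fun a : ℝ => a + (1 - β)⁻¹ * ∫ r, max (L w r - a) 0 ∂μ)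
        (((μ {r | L w r ≤ α}).toReal - β) / (1 - β)) α) ∧
    Continuous (fun α : ℝ => ((μ {r | L w r ≤ α}).toReal - β) / (1 - β)) :=
  stmt_1_general μ L w β hβ hint hcont
end

section
/- Fix w ∈ ℝⁿ and β ∈ (0,1), and suppose L(w,·) is measurable and μ-integrable and Φ(w,·) is continuous. Then the infimum over α ∈ ℝ of F_β(w,α) is attained and equals CVaR_β(w); that is, min_α F_β(w,α) = φ_β(w) = (1−β)⁻¹ ∫_{{r : L(w,r) ≥ VaR_β(w)}} L(w,r) dμ(r). -/
/-!
Rockafellar–Uryasev. Put `A = {α₀ ≤ L}` and `p = μ A > 0`. For every `α`, `(L - α)⁺ ≥ 1_A (L - α)`,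
so `α + p⁻¹ ∫ (L - α)⁺ ≥ α + p⁻¹ (∫_A L - p α) = p⁻¹ ∫_A L`, with equality at `α = α₀`, where
`(L - α₀)⁺ = 1_A (L - α₀)`. For `α₀ = VaR_β` one has `p = 1 - β`: continuity of the distribution
function `Φ` forces `Φ α₀ = β` (the least point of the closed set `{Φ ≥ β}` is a limit of points
where `Φ < β`), and it also gives `μ {L < α₀} = Φ α₀`.
-/

open MeasureTheory ProbabilityTheory Set Filter Topology

lemma Continuous.apply_csInf_setOf_le_eq {α β : Type*} [ConditionallyCompleteLinearOrder α]
    [TopologicalSpace α] [OrderTopology α] [DenselyOrdered α] [NoMinOrder α]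
    [LinearOrder β] [TopologicalSpace β] [OrderClosedTopology β]
    {f : α → β} (hf : Continuous f) {b : β}
    (hne : {a | b ≤ f a}.Nonempty) (hbdd : BddBelow {a | b ≤ f a}) :
    f (sInf {a | b ≤ f a}) = b := by
  set S := {a | b ≤ f a}
  have hmem : sInf S ∈ S := (isClosed_le continuous_const hf).csInf_mem hne hbdd
  refine le_antisymm (le_of_tendsto
    (hf.continuousAt.mono_left (nhdsWithin_le_nhds (s := Iio (sInf S)))) ?_) hmem
  filter_upwards [self_mem_nhdsWithin (s := Iio (sInf S))] with a ha
  exact le_of_lt (not_le.1 fun h => not_le.2 ha (csInf_le hbdd h))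

namespace ProbabilityTheory

lemma cdf_csInf_setOf_le_cdf_eq (ν : Measure ℝ) (hcont : Continuous (cdf ν)) {β : ℝ}
    (hβ : β ∈ Ioo 0 1) : cdf ν (sInf {a | β ≤ cdf ν a}) = β := by
  refine hcont.apply_csInf_setOf_le_eq ((tendsto_cdf_atTop ν).eventually_const_le hβ.2).exists ?_
  obtain ⟨b, hb⟩ := ((tendsto_cdf_atBot ν).eventually_lt_const hβ.1).exists
  exact ⟨b, fun a ha => le_of_not_ge fun hab => (hb.trans_le (ha.trans (monotone_cdf ν hab))).false⟩

lemma measureReal_Ici_eq_one_sub_cdf (ν : Measure ℝ) [IsProbabilityMeasure ν] {x : ℝ}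
    (hx : ContinuousAt (cdf ν) x) : ν.real (Ici x) = 1 - cdf ν x := by
  have h := (cdf ν).measure_Ici (tendsto_cdf_atTop ν) x
  rw [measure_cdf] at h
  rw [measureReal_def, h, hx.continuousWithinAt.leftLim_eq,
    ENNReal.toReal_ofReal (sub_nonneg.2 (cdf_le_one ν x))]

end ProbabilityTheory

section

variable {Ω : Type*} [MeasurableSpace Ω] {μ : Measure Ω} {X : Ω → ℝ}

lemma toReal_measure_setOf_le_eq_cdf_map [IsProbabilityMeasure μ] (hX : AEMeasurable X μ)
    (a : ℝ) : (μ {ω | X ω ≤ a}).toReal = cdf (μ.map X) a := by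
  have := Measure.isProbabilityMeasure_map hX
  rw [cdf_eq_real, measureReal_def, Measure.map_apply_of_aemeasurable hX measurableSet_Iic]
  rfl

lemma measureReal_setOf_ge_eq_map_Ici (hX : AEMeasurable X μ) (a : ℝ) :
    μ.real {ω | a ≤ X ω} = (μ.map X).real (Ici a) := by
  rw [measureReal_def, measureReal_def, Measure.map_apply_of_aemeasurable hX measurableSet_Ici]
  rfl

lemma integral_max_sub_zero_eq_setIntegral (hX : AEMeasurable X μ) (α : ℝ) :
    ∫ ω, max (X ω - α) 0 ∂μ = ∫ ω in {ω | α ≤ X ω}, (X ω - α) ∂μ := by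
  rw [← integral_indicator₀ (nullMeasurableSet_le aemeasurable_const hX)]
  congr 1 with ω
  by_cases h : α ≤ X ω
  · simp [h]
  · simp [h, (not_le.1 h).le]

lemma setIntegral_sub_le_integral_max [IsFiniteMeasure μ] (hX : Integrable X μ) (s : Set Ω)
    (α : ℝ) :
    ∫ ω in s, (X ω - α) ∂μ ≤ ∫ ω, max (X ω - α) 0 ∂μ := by
  calc ∫ ω in s, (X ω - α) ∂μ ≤ ∫ ω in s, max (X ω - α) 0 ∂μ :=
        setIntegral_mono (hX.sub (integrable_const α)).integrableOn
          (hX.sub (integrable_const α)).pos_part.integrableOn fun ω => le_max_left _ _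
    _ ≤ ∫ ω, max (X ω - α) 0 ∂μ :=
        setIntegral_le_integral (hX.sub (integrable_const α)).pos_part
          (ae_of_all _ fun ω => le_max_right _ _)

theorem isLeast_range_add_inv_mul_integral_max [IsFiniteMeasure μ] (hX : Integrable X μ)
    {α₀ : ℝ} (hp : 0 < μ.real {ω | α₀ ≤ X ω}) :
    IsLeast (range fun α => α + (μ.real {ω | α₀ ≤ X ω})⁻¹ * ∫ ω, max (X ω - α) 0 ∂μ)
      ((μ.real {ω | α₀ ≤ X ω})⁻¹ * ∫ ω in {ω | α₀ ≤ X ω}, X ω ∂μ) := by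
  set A := {ω | α₀ ≤ X ω}
  set p := μ.real A
  have hsub (α : ℝ) : ∫ ω in A, (X ω - α) ∂μ = ∫ ω in A, X ω ∂μ - p * α := by
    rw [integral_sub hX.integrableOn (integrableOn_const), setIntegral_const, smul_eq_mul]
  refine ⟨⟨α₀, ?_⟩, ?_⟩
  · dsimp only
    rw [integral_max_sub_zero_eq_setIntegral hX.aemeasurable, hsub]
    field_simp
    ring
  · rintro _ ⟨α, rfl⟩
    have h := setIntegral_sub_le_integral_max hX A α
    rw [hsub] at h
    calc p⁻¹ * ∫ ω in A, X ω ∂μ = α + p⁻¹ * (∫ ω in A, X ω ∂μ - p * α) := by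
          field_simp
          ring
      _ ≤ α + p⁻¹ * ∫ ω, max (X ω - α) 0 ∂μ := by gcongr

end

theorem stmt_2_general {n : ℕ} (μ : Measure (Fin n → ℝ)) [IsProbabilityMeasure μ]
    (L : (Fin n → ℝ) → (Fin n → ℝ) → ℝ) (w : Fin n → ℝ) (β : ℝ)
    (hβ : β ∈ Set.Ioo (0 : ℝ) 1)
    (hint : Integrable (L w) μ)
    (hcont : Continuous (fun α : ℝ => (μ {r | L w r ≤ α}).toReal)) :
    IsLeast
      (Set.range (fun α : ℝ => α + (1 - β)⁻¹ * ∫ r, max (L w r - α) 0 ∂μ))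
      ((1 - β)⁻¹ *
        ∫ r in {r | sInf {a : ℝ | β ≤ (μ {r' | L w r' ≤ a}).toReal} ≤ L w r},
          L w r ∂μ) := by
  have hX := hint.aemeasurable
  have := Measure.isProbabilityMeasure_map hX
  simp only [toReal_measure_setOf_le_eq_cdf_map hX] at hcont ⊢
  set α₀ := sInf {a | β ≤ cdf (μ.map (L w)) a}
  have hp : μ.real {r | α₀ ≤ L w r} = 1 - β := by
    rw [measureReal_setOf_ge_eq_map_Ici hX, measureReal_Ici_eq_one_sub_cdf _ hcont.continuousAt,
      cdf_csInf_setOf_le_cdf_eq _ hcont hβ]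
  rw [← hp]
  exact isLeast_range_add_inv_mul_integral_max hint (hp ▸ sub_pos.2 hβ.2)

/-- For fixed `w` and `β ∈ (0,1)`, with `L w` measurable and integrable and
`Φ(w,·)` continuous, the infimum over `α` of `F_β(w,α)` is attained and equals
`CVaR_β(w) = (1-β)⁻¹ ∫_{L(w,r) ≥ VaR_β(w)} L w r ∂μ`, where
`VaR_β(w) = min {α | Φ(w,α) ≥ β}` (the least such `α`, expressed as `sInf`). -/
theorem stmt_2 {n : ℕ} (μ : Measure (Fin n → ℝ)) [IsProbabilityMeasure μ]
    (L : (Fin n → ℝ) → (Fin n → ℝ) → ℝ) (w : Fin n → ℝ) (β : ℝ)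
    (hβ : β ∈ Set.Ioo (0 : ℝ) 1)
    (hmeas : Measurable (L w)) (hint : Integrable (L w) μ)
    (hcont : Continuous (fun α : ℝ => (μ {r | L w r ≤ α}).toReal)) :
    IsLeast
      (Set.range (fun α : ℝ => α + (1 - β)⁻¹ * ∫ r, max (L w r - α) 0 ∂μ))
      ((1 - β)⁻¹ *
        ∫ r in {r | sInf {a : ℝ | β ≤ (μ {r' | L w r' ≤ a}).toReal} ≤ L w r},
          L w r ∂μ) :=
  stmt_2_general μ L w β hβ hint hcont
end

section
/- Fix w ∈ ℝⁿ and β ∈ (0,1), and suppose L(w,·) is measurable and μ-integrable. Then the set A_β(w) = argmin_{α ∈ ℝ} F_β(w,α) is a nonempty closed bounded interval (i.e., nonempty, compact, and convex). -/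
open MeasureTheory Filter Set Topology

/-!
Write `F(α) = α + (1 - β)⁻¹ 𝔼[(L - α)⁺]`. The map `α ↦ 𝔼[(L - α)⁺]` is convex and
1-Lipschitz, so `F` is convex and continuous. It is also coercive: `F(α) ≥ α`, and by
`(L - α)⁺ ≥ L - α` also `F(α) ≥ (1 - β)⁻¹ 𝔼[L] - ((1 - β)⁻¹ - 1) α`, whose slope is negative
exactly because `0 < β`. A continuous coercive function attains its infimum, and its set of
minimizers is the sublevel set at the minimum value, which is closed and bounded, and convex
because `F` is.
-/

section Minimizers

variable {X α : Type*}

lemma setOf_eq_iInf_eq_setOf_le [ConditionallyCompleteLinearOrder α] {f : X → α} {x₀ : X}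
    (hx₀ : ∀ x, f x₀ ≤ f x) : {x | f x = ⨅ y, f y} = {x | f x ≤ f x₀} := by
  have : Nonempty X := ⟨x₀⟩
  have hinf : ⨅ y, f y = f x₀ :=
    le_antisymm (ciInf_le ⟨f x₀, by rintro _ ⟨y, rfl⟩; exact hx₀ y⟩ x₀) (le_ciInf hx₀)
  ext x
  change f x = _ ↔ f x ≤ f x₀
  rw [hinf]
  exact ⟨le_of_eq, fun h => le_antisymm h (hx₀ x)⟩

lemma isCompact_setOf_le_of_tendsto_cocompact [TopologicalSpace X] [LinearOrder α]
    [TopologicalSpace α] [ClosedIicTopology α] [NoMaxOrder α] {f : X → α} (hf : Continuous f)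
    (hlim : Tendsto f (cocompact X) atTop) (r : α) : IsCompact {x | f x ≤ r} := by
  obtain ⟨K, hK, hsub⟩ := mem_cocompact'.1 (hlim (Ioi_mem_atTop r))
  exact hK.of_isClosed_subset (isClosed_Iic.preimage hf)
    fun x hx => hsub (not_lt.2 hx)

theorem nonempty_isCompact_convex_setOf_eq_iInf {E : Type*} [TopologicalSpace E]
    [AddCommGroup E] [Module ℝ E] {f : E → ℝ} (hf : Continuous f) (hconv : ConvexOn ℝ univ f)
    (hlim : Tendsto f (cocompact E) atTop) :
    {x | f x = ⨅ y, f y}.Nonempty ∧ IsCompact {x | f x = ⨅ y, f y} ∧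
      Convex ℝ {x | f x = ⨅ y, f y} := by
  obtain ⟨x₀, hx₀⟩ := hf.exists_forall_le hlim
  rw [setOf_eq_iInf_eq_setOf_le hx₀]
  refine ⟨⟨x₀, le_refl (f x₀)⟩, isCompact_setOf_le_of_tendsto_cocompact hf hlim _, ?_⟩
  simpa only [mem_univ, true_and] using hconv.convex_le (f x₀)

end Minimizers

section CVaR

variable {Ω : Type*} [MeasurableSpace Ω] {μ : Measure Ω} {X : Ω → ℝ}

noncomputable def expectedExcess (μ : Measure Ω) (X : Ω → ℝ) (α : ℝ) : ℝ :=
  ∫ ω, max (X ω - α) 0 ∂μ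

/-- The Rockafellar–Uryasev function `F_β`, whose minimum value is the CVaR at level `β`. -/
noncomputable def cvarObjective (μ : Measure Ω) (X : Ω → ℝ) (β α : ℝ) : ℝ :=
  α + (1 - β)⁻¹ * expectedExcess μ X α

lemma MeasureTheory.Integrable.posPart_sub_const [IsFiniteMeasure μ] (hX : Integrable X μ) (α : ℝ) :
    Integrable (fun ω => max (X ω - α) 0) μ :=
  (hX.sub (integrable_const α)).pos_part

lemma expectedExcess_nonneg (α : ℝ) : 0 ≤ expectedExcess μ X α :=
  integral_nonneg fun _ => le_max_right _ _

lemma integral_sub_le_expectedExcess [IsProbabilityMeasure μ] (hX : Integrable X μ) (α : ℝ) :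
    ∫ ω, X ω ∂μ - α ≤ expectedExcess μ X α := by
  calc ∫ ω, X ω ∂μ - α = ∫ ω, (X ω - α) ∂μ := by
        rw [integral_sub hX (integrable_const α), integral_const, probReal_univ, one_smul]
    _ ≤ expectedExcess μ X α :=
        integral_mono (hX.sub (integrable_const α)) (hX.posPart_sub_const α)
          fun _ => le_max_left _ _

lemma lipschitzWith_expectedExcess [IsProbabilityMeasure μ] (hX : Integrable X μ) :
    LipschitzWith 1 (expectedExcess μ X) := by
  refine LipschitzWith.of_dist_le_mul fun x y => ?_
  have hpt : ∀ ω, ‖max (X ω - x) 0 - max (X ω - y) 0‖ ≤ dist x y := fun ω => by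
    calc ‖max (X ω - x) 0 - max (X ω - y) 0‖ ≤ |(X ω - x) - (X ω - y)| :=
          abs_max_sub_max_le_abs _ _ _
      _ = dist x y := by rw [Real.dist_eq, abs_sub_comm]; ring_nf
  calc dist (expectedExcess μ X x) (expectedExcess μ X y)
      = ‖∫ ω, (max (X ω - x) 0 - max (X ω - y) 0) ∂μ‖ := by
        rw [dist_eq_norm, expectedExcess, expectedExcess,
          integral_sub (hX.posPart_sub_const x) (hX.posPart_sub_const y)]
    _ ≤ dist x y * μ.real univ := norm_integral_le_of_norm_le_const (ae_of_all _ hpt)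
    _ = (1 : NNReal) * dist x y := by simp

lemma convexOn_expectedExcess [IsFiniteMeasure μ] (hX : Integrable X μ) :
    ConvexOn ℝ univ (expectedExcess μ X) := by
  refine ⟨convex_univ, fun x _ y _ a b ha hb hab => ?_⟩
  have hpt : ∀ ω, max (X ω - (a • x + b • y)) 0
      ≤ a * max (X ω - x) 0 + b * max (X ω - y) 0 := fun ω => by
    have hsplit : X ω - (a • x + b • y) = a * (X ω - x) + b * (X ω - y) := by
      rw [smul_eq_mul, smul_eq_mul]; linear_combination (-X ω) * hab
    rw [hsplit]
    exact max_le (add_le_add (mul_le_mul_of_nonneg_left (le_max_left _ _) ha)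
      (mul_le_mul_of_nonneg_left (le_max_left _ _) hb))
      (add_nonneg (mul_nonneg ha (le_max_right _ _)) (mul_nonneg hb (le_max_right _ _)))
  have hintx := (hX.posPart_sub_const x).const_mul a
  have hinty := (hX.posPart_sub_const y).const_mul b
  calc expectedExcess μ X (a • x + b • y)
      ≤ ∫ ω, (a * max (X ω - x) 0 + b * max (X ω - y) 0) ∂μ :=
        integral_mono (hX.posPart_sub_const _) (hintx.add hinty) hpt
    _ = a • expectedExcess μ X x + b • expectedExcess μ X y := by
        rw [integral_add hintx hinty, integral_const_mul, integral_const_mul]; rfl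

variable [IsProbabilityMeasure μ]

lemma continuous_cvarObjective (hX : Integrable X μ) (β : ℝ) :
    Continuous (cvarObjective μ X β) :=
  continuous_id.add (continuous_const.mul (lipschitzWith_expectedExcess hX).continuous)

lemma convexOn_cvarObjective (hX : Integrable X μ) {β : ℝ} (hβ : β ≤ 1) :
    ConvexOn ℝ univ (cvarObjective μ X β) :=
  (convexOn_id convex_univ).add
    ((convexOn_expectedExcess hX).smul (inv_nonneg.2 (sub_nonneg.2 hβ)))

lemma tendsto_cvarObjective_cocompact (hX : Integrable X μ) {β : ℝ} (hβ : β ∈ Ioo 0 1) :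
    Tendsto (cvarObjective μ X β) (cocompact ℝ) atTop := by
  set c := (1 - β)⁻¹
  have hc : 1 < c := one_lt_inv₀ (by linarith [hβ.2]) |>.2 (by linarith [hβ.1])
  rw [cocompact_eq_atBot_atTop, tendsto_sup]
  constructor
  · have hlin : Tendsto (fun α => c * ∫ ω, X ω ∂μ + (c - 1) * -α) atBot atTop :=
      tendsto_atTop_add_const_left _ _
        (tendsto_neg_atBot_atTop.const_mul_atTop (by linarith))
    refine tendsto_atTop_mono (fun α => ?_) hlin
    have := mul_le_mul_of_nonneg_left (integral_sub_le_expectedExcess hX α) (by linarith)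
    simp only [cvarObjective]
    linarith
  · refine tendsto_atTop_mono (fun α => ?_) tendsto_id
    have := mul_nonneg (by linarith : (0 : ℝ) ≤ c) (expectedExcess_nonneg (μ := μ) (X := X) α)
    simp only [cvarObjective, id]
    linarith

end CVaR

theorem stmt_3_general {n : ℕ} (μ : Measure (Fin n → ℝ)) [IsProbabilityMeasure μ]
    (L : (Fin n → ℝ) → (Fin n → ℝ) → ℝ) (w : Fin n → ℝ) (β : ℝ)
    (hβ : β ∈ Set.Ioo (0 : ℝ) 1)
    (hint : Integrable (L w) μ) :
    ({α : ℝ | (α + (1 - β)⁻¹ * ∫ r, max (L w r - α) 0 ∂μ)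
        = ⨅ α' : ℝ, (α' + (1 - β)⁻¹ * ∫ r, max (L w r - α') 0 ∂μ)}).Nonempty ∧
    IsCompact {α : ℝ | (α + (1 - β)⁻¹ * ∫ r, max (L w r - α) 0 ∂μ)
        = ⨅ α' : ℝ, (α' + (1 - β)⁻¹ * ∫ r, max (L w r - α') 0 ∂μ)} ∧
    Convex ℝ {α : ℝ | (α + (1 - β)⁻¹ * ∫ r, max (L w r - α) 0 ∂μ)
        = ⨅ α' : ℝ, (α' + (1 - β)⁻¹ * ∫ r, max (L w r - α') 0 ∂μ)} :=
  nonempty_isCompact_convex_setOf_eq_iInf (continuous_cvarObjective hint β)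
    (convexOn_cvarObjective hint hβ.2.le) (tendsto_cvarObjective_cocompact hint hβ)

/-- For fixed `w` and `β ∈ (0,1)`, with `L w` measurable and integrable, the set
`A_β(w) = {α | F_β(w,α) = ⨅ α', F_β(w,α')}` of minimizers of `F_β(w,·)` is a nonempty
closed bounded interval (nonempty, compact and convex). -/
theorem stmt_3 {n : ℕ} (μ : Measure (Fin n → ℝ)) [IsProbabilityMeasure μ]
    (L : (Fin n → ℝ) → (Fin n → ℝ) → ℝ) (w : Fin n → ℝ) (β : ℝ)
    (hβ : β ∈ Set.Ioo (0 : ℝ) 1)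
    (hmeas : Measurable (L w)) (hint : Integrable (L w) μ) :
    ({α : ℝ | (α + (1 - β)⁻¹ * ∫ r, max (L w r - α) 0 ∂μ)
        = ⨅ α' : ℝ, (α' + (1 - β)⁻¹ * ∫ r, max (L w r - α') 0 ∂μ)}).Nonempty ∧
    IsCompact {α : ℝ | (α + (1 - β)⁻¹ * ∫ r, max (L w r - α) 0 ∂μ)
        = ⨅ α' : ℝ, (α' + (1 - β)⁻¹ * ∫ r, max (L w r - α') 0 ∂μ)} ∧
    Convex ℝ {α : ℝ | (α + (1 - β)⁻¹ * ∫ r, max (L w r - α) 0 ∂μ)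
        = ⨅ α' : ℝ, (α' + (1 - β)⁻¹ * ∫ r, max (L w r - α') 0 ∂μ)} :=
  stmt_3_general μ L w β hβ hint
end

section
/- Let X ⊆ ℝⁿ and β ∈ (0,1), and suppose for every w ∈ X that L(w,·) is measurable and μ-integrable and Φ(w,·) is continuous. Then minimizing CVaR over X is equivalent to jointly minimizing F_β over X × ℝ: inf_{w ∈ X} φ_β(w) = inf_{(w,α) ∈ X × ℝ} F_β(w,α). -/
/-!
Fix `w` and write `f = L w`. Since the distribution function of `f` is continuous, VaR `q`
satisfies `P(f ≤ q) = β`, so the tail `{q ≤ f}` has mass exactly `1 - β`. For every `α`,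
`∫_{tail} f - (1 - β) α = ∫_{tail} (f - α) ≤ E (f - α)⁺`, with equality at `α = q` because
`(f - q)⁺` vanishes off the tail. Hence `CVaR = min_α F_β(w, α)`, and the infimum over `w` of
these minima is the joint infimum over `(w, α)`.
-/

open MeasureTheory ProbabilityTheory Filter Topology Set Function

lemma apply_csInf_setOf_le_eq {F : ℝ → ℝ} (hF : Continuous F) {l u β : ℝ}
    (hbot : Tendsto F atBot (𝓝 l)) (htop : Tendsto F atTop (𝓝 u)) (hl : l < β) (hu : β < u) :
    F (sInf {a | β ≤ F a}) = β := by
  set S := {a | β ≤ F a}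
  have hS : S.Nonempty := (htop.eventually (eventually_ge_nhds hu)).exists
  obtain ⟨m, hm⟩ := eventually_atBot.1 (hbot.eventually (eventually_lt_nhds hl))
  have hSm : BddBelow S := ⟨m, fun a ha => le_of_not_ge fun ham => (hm a ham).not_ge ha⟩
  have hmem : sInf S ∈ S := (isClosed_le continuous_const hF).csInf_mem hS hSm
  have hbelow : ∀ a ∈ Iio (sInf S), F a ≤ β := fun a ha =>
    le_of_not_ge fun hβa => (csInf_le hSm hβa).not_gt ha
  exact le_antisymm (le_of_tendsto (hF.continuousWithinAt.tendsto (s := Iio (sInf S)))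
    (eventually_nhdsWithin_of_forall hbelow)) hmem

section

variable {Ω : Type*} [MeasurableSpace Ω] {μ : Measure Ω} [IsProbabilityMeasure μ] {f : Ω → ℝ}

lemma cdf_map_eq_measureReal (hf : AEMeasurable f μ) :
    cdf (μ.map f) = fun a => μ.real {x | f x ≤ a} := by
  have := Measure.isProbabilityMeasure_map hf
  ext a
  rw [cdf_eq_real, map_measureReal_apply_of_aemeasurable hf measurableSet_Iic]
  rfl

lemma measureReal_setOf_ge_of_continuousAt (hf : AEMeasurable f μ) {a : ℝ}
    (hc : ContinuousAt (fun a => μ.real {x | f x ≤ a}) a) :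
    μ.real {x | a ≤ f x} = 1 - μ.real {x | f x ≤ a} := by
  have := Measure.isProbabilityMeasure_map hf
  have hcdf := cdf_map_eq_measureReal hf
  have hleft : leftLim (cdf (μ.map f)) a = cdf (μ.map f) a :=
    (hcdf ▸ hc).continuousWithinAt.leftLim_eq
  rw [show {x | a ≤ f x} = f ⁻¹' Ici a from rfl,
    ← map_measureReal_apply_of_aemeasurable hf measurableSet_Ici, ← measure_cdf (μ.map f),
    measureReal_def, StieltjesFunction.measure_Ici _ (tendsto_cdf_atTop _), hleft,
    ENNReal.toReal_ofReal (sub_nonneg.2 (cdf_le_one _ _)), hcdf]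

end

section

variable {Ω : Type*} [MeasurableSpace Ω] {μ : Measure Ω} [IsFiniteMeasure μ] {f : Ω → ℝ}

lemma setIntegral_sub_measureReal_mul_le_integral_max_sub (hf : Integrable f μ) (s : Set Ω)
    (α : ℝ) : ∫ x in s, f x ∂μ - μ.real s * α ≤ ∫ x, max (f x - α) 0 ∂μ := by
  have hfα : Integrable (fun x => f x - α) μ := hf.sub (integrable_const α)
  calc ∫ x in s, f x ∂μ - μ.real s * α = ∫ x in s, (f x - α) ∂μ := by
        rw [integral_sub hf.integrableOn (integrable_const α), setIntegral_const, smul_eq_mul]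
    _ ≤ ∫ x in s, max (f x - α) 0 ∂μ :=
        setIntegral_mono hfα.integrableOn hfα.pos_part.integrableOn fun x => le_max_left _ _
    _ ≤ ∫ x, max (f x - α) 0 ∂μ :=
        setIntegral_le_integral hfα.pos_part (Eventually.of_forall fun x => le_max_right _ _)

lemma integral_max_sub_eq_setIntegral_sub (hf : Integrable f μ) (α : ℝ) :
    ∫ x, max (f x - α) 0 ∂μ = ∫ x in {x | α ≤ f x}, f x ∂μ - μ.real {x | α ≤ f x} * α := by
  have hs : NullMeasurableSet {x | α ≤ f x} μ :=
    nullMeasurableSet_le aemeasurable_const hf.aemeasurable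
  have hmax : (fun x => max (f x - α) 0) = {x | α ≤ f x}.indicator (fun x => f x - α) := by
    ext x
    by_cases hx : α ≤ f x
    · simp [hx]
    · simp [hx, (not_le.1 hx).le]
  rw [hmax, integral_indicator₀ hs, integral_sub hf.integrableOn (integrable_const α),
    setIntegral_const, smul_eq_mul]

end

section

variable {Ω : Type*} [MeasurableSpace Ω] (μ : Measure Ω) (f : Ω → ℝ) (β : ℝ)

noncomputable def valueAtRisk : ℝ := sInf {a | β ≤ μ.real {x | f x ≤ a}}

noncomputable def conditionalValueAtRisk : ℝ :=
  (1 - β)⁻¹ * ∫ x in {x | valueAtRisk μ f β ≤ f x}, f x ∂μ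

noncomputable def rockafellarUryasev (α : ℝ) : ℝ := α + (1 - β)⁻¹ * ∫ x, max (f x - α) 0 ∂μ

variable {μ f β} [IsProbabilityMeasure μ]

lemma measureReal_setOf_valueAtRisk_le (hβ : β ∈ Ioo 0 1) (hf : AEMeasurable f μ)
    (hc : Continuous fun a => μ.real {x | f x ≤ a}) :
    μ.real {x | valueAtRisk μ f β ≤ f x} = 1 - β := by
  have hcdf := cdf_map_eq_measureReal hf
  have hvar : μ.real {x | f x ≤ valueAtRisk μ f β} = β := by
    have := Measure.isProbabilityMeasure_map hf
    simpa only [hcdf, valueAtRisk] using apply_csInf_setOf_le_eq (hcdf ▸ hc)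
      (tendsto_cdf_atBot (μ.map f)) (tendsto_cdf_atTop (μ.map f)) hβ.1 hβ.2
  rw [measureReal_setOf_ge_of_continuousAt hf hc.continuousAt, hvar]

theorem isLeast_rockafellarUryasev (hβ : β ∈ Ioo 0 1) (hf : Integrable f μ)
    (hc : Continuous fun a => μ.real {x | f x ≤ a}) :
    IsLeast (range (rockafellarUryasev μ f β)) (conditionalValueAtRisk μ f β) := by
  set q := valueAtRisk μ f β
  have htail : μ.real {x | q ≤ f x} = 1 - β :=
    measureReal_setOf_valueAtRisk_le hβ hf.aemeasurable hc
  have hβ' : 1 - β ≠ 0 := (sub_pos.2 hβ.2).ne'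
  have hshift : ∀ α, α + (1 - β)⁻¹ * (∫ x in {x | q ≤ f x}, f x ∂μ - (1 - β) * α) =
      conditionalValueAtRisk μ f β := fun α => by
    rw [conditionalValueAtRisk]; field_simp; ring
  refine ⟨⟨q, ?_⟩, ?_⟩
  · rw [rockafellarUryasev, integral_max_sub_eq_setIntegral_sub hf, htail, hshift]
  · rintro _ ⟨α, rfl⟩
    rw [← hshift α, rockafellarUryasev, ← htail]
    gcongr
    exact setIntegral_sub_measureReal_mul_le_integral_max_sub hf _ α

end

theorem stmt_6_general {n : ℕ} (μ : Measure (Fin n → ℝ)) [IsProbabilityMeasure μ]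
    (L : (Fin n → ℝ) → (Fin n → ℝ) → ℝ) (X : Set (Fin n → ℝ)) (β : ℝ)
    (hβ : β ∈ Set.Ioo (0 : ℝ) 1)
    (hint : ∀ w ∈ X, Integrable (L w) μ)
    (hcont : ∀ w ∈ X, Continuous (fun α : ℝ => (μ {r | L w r ≤ α}).toReal)) :
    sInf {y : ℝ | ∃ w ∈ X,
        y = (1 - β)⁻¹ *
          ∫ r in {r | sInf {a : ℝ | β ≤ (μ {r' | L w r' ≤ a}).toReal} ≤ L w r},
            L w r ∂μ}
    = sInf {y : ℝ | ∃ w ∈ X, ∃ α : ℝ,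
        y = α + (1 - β)⁻¹ * ∫ r, max (L w r - α) 0 ∂μ} := by
  have hleast : ∀ w ∈ X,
      IsLeast (range (rockafellarUryasev μ (L w) β)) (conditionalValueAtRisk μ (L w) β) :=
    fun w hw => isLeast_rockafellarUryasev hβ (hint w hw) (hcont w hw)
  refine csInf_eq_csInf_of_forall_exists_le ?_ ?_
  · rintro _ ⟨w, hw, rfl⟩
    obtain ⟨α, hα⟩ := (hleast w hw).1
    exact ⟨_, ⟨w, hw, α, rfl⟩, hα.le⟩
  · rintro _ ⟨w, hw, α, rfl⟩
    exact ⟨_, ⟨w, hw, rfl⟩, (hleast w hw).2 ⟨α, rfl⟩⟩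

/-- For `X ⊆ ℝⁿ` and `β ∈ (0,1)`, with `L w` measurable and integrable and
`Φ(w,·)` continuous for every `w ∈ X`, minimizing CVaR over `X` is equivalent to jointly
minimizing `F_β` over `X × ℝ`:
`inf_{w ∈ X} φ_β(w) = inf_{(w,α) ∈ X × ℝ} F_β(w,α)`, where
`φ_β(w) = (1-β)⁻¹ ∫_{L(w,r) ≥ VaR_β(w)} L w r ∂μ` and
`VaR_β(w) = min {α | Φ(w,α) ≥ β}` (expressed as `sInf`). -/
theorem stmt_6 {n : ℕ} (μ : Measure (Fin n → ℝ)) [IsProbabilityMeasure μ]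
    (L : (Fin n → ℝ) → (Fin n → ℝ) → ℝ) (X : Set (Fin n → ℝ)) (β : ℝ)
    (hβ : β ∈ Set.Ioo (0 : ℝ) 1)
    (hmeas : ∀ w ∈ X, Measurable (L w)) (hint : ∀ w ∈ X, Integrable (L w) μ)
    (hcont : ∀ w ∈ X, Continuous (fun α : ℝ => (μ {r | L w r ≤ α}).toReal)) :
    sInf {y : ℝ | ∃ w ∈ X,
        y = (1 - β)⁻¹ *
          ∫ r in {r | sInf {a : ℝ | β ≤ (μ {r' | L w r' ≤ a}).toReal} ≤ L w r},
            L w r ∂μ}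
    = sInf {y : ℝ | ∃ w ∈ X, ∃ α : ℝ,
        y = α + (1 - β)⁻¹ * ∫ r, max (L w r - α) 0 ∂μ} :=
  stmt_6_general μ L X β hβ hint hcont
end

section
/- Let β ∈ (0,1) and suppose L(w,r) is convex in w for each fixed r, L(w,·) is measurable and μ-integrable for every w. Then (w,α) ↦ F_β(w,α) = α + (1−β)⁻¹ ∫ max(L(w,r) − α, 0) dμ(r) is a convex function on ℝⁿ × ℝ. -/
open MeasureTheory

/-- For `β ∈ (0,1)`, if `L (·, r)` is convex in `w` for each fixed `r` and `L w`
is measurable and integrable for every `w`, then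
`(w,α) ↦ F_β(w,α) = α + (1-β)⁻¹ ∫ max (L w r - α) 0 ∂μ` is convex on `ℝⁿ × ℝ`. -/
theorem stmt_7 {n : ℕ} (μ : Measure (Fin n → ℝ)) [IsProbabilityMeasure μ]
    (L : (Fin n → ℝ) → (Fin n → ℝ) → ℝ) (β : ℝ)
    (hβ : β ∈ Set.Ioo (0 : ℝ) 1)
    (hconv : ∀ r : Fin n → ℝ, ConvexOn ℝ Set.univ (fun w : Fin n → ℝ => L w r))
    (hmeas : ∀ w : Fin n → ℝ, Measurable (L w))
    (hint : ∀ w : Fin n → ℝ, Integrable (L w) μ) :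
    ConvexOn ℝ (Set.univ : Set ((Fin n → ℝ) × ℝ))
      (fun p : (Fin n → ℝ) × ℝ =>
        p.2 + (1 - β)⁻¹ * ∫ r, max (L p.1 r - p.2) 0 ∂μ) := by
  have hc : (0:ℝ) ≤ (1 - β)⁻¹ := by
    have : 0 < 1 - β := by linarith [hβ.2]
    positivity
  have hintble : ∀ (w : Fin n → ℝ) (α : ℝ),
      Integrable (fun r => max (L w r - α) 0) μ := fun w α =>
    ((hint w).sub (integrable_const α)).pos_part
  refine ⟨convex_univ, ?_⟩
  rintro ⟨w, α⟩ - ⟨w', α'⟩ - a b ha hb hab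
  simp only [Prod.smul_mk, Prod.mk_add_mk, smul_eq_mul]
  have hpt : ∀ r, max (L (a • w + b • w') r - (a * α + b * α')) 0 ≤
      a * max (L w r - α) 0 + b * max (L w' r - α') 0 := by
    intro r
    have hL : L (a • w + b • w') r ≤ a * L w r + b * L w' r :=
      (hconv r).2 (Set.mem_univ w) (Set.mem_univ w') ha hb hab
    have h0 : 0 ≤ a * max (L w r - α) 0 + b * max (L w' r - α') 0 := by
      have := le_max_right (L w r - α) 0
      have := le_max_right (L w' r - α') 0
      nlinarith
    refine max_le ?_ h0
    have h1 : L w r - α ≤ max (L w r - α) 0 := le_max_left _ _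
    have h2 : L w' r - α' ≤ max (L w' r - α') 0 := le_max_left _ _
    nlinarith
  have hmono : ∫ r, max (L (a • w + b • w') r - (a * α + b * α')) 0 ∂μ ≤
      ∫ r, (a * max (L w r - α) 0 + b * max (L w' r - α') 0) ∂μ :=
    integral_mono (hintble _ _)
      (((hintble w α).const_mul a).add ((hintble w' α').const_mul b)) hpt
  have hsplit : ∫ r, (a * max (L w r - α) 0 + b * max (L w' r - α') 0) ∂μ =
      a * ∫ r, max (L w r - α) 0 ∂μ + b * ∫ r, max (L w' r - α') 0 ∂μ := by
    rw [integral_add ((hintble w α).const_mul a) ((hintble w' α').const_mul b),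
      integral_const_mul, integral_const_mul]
  have := hmono.trans_eq hsplit
  nlinarith [this, hc, mul_le_mul_of_nonneg_left this hc]
end

section
/- Let X ⊆ ℝⁿ, let β₁,…,β_K ∈ (0,1), let C_{β₁},…,C_{β_K} ∈ ℝ, and suppose for every w ∈ X and each k that L(w,·) is measurable and μ-integrable and that the infimum of α ↦ F_{β_k}(w,α) is attained. If (w*, C*) is an optimal solution of Problem A (minimize C over (w,C) ∈ X × ℝ subject to min_{α_k} F_{β_k}(w, α_k) ≤ C + C_{β_k} for k = 1,…,K), and α*_k ∈ argmin_{α_k} F_{β_k}(w*, α_k) for each k, then (w*, C*, α*) is an optimal solution of Problem B (minimize C over (w, C, α) ∈ X × ℝ × ℝ^K subject to F_{β_k}(w, α_k) ≤ C + C_{β_k} for k = 1,…,K). -/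
open MeasureTheory

/-- Let `X ⊆ ℝⁿ`, `β₁,…,β_K ∈ (0,1)`, `C_{β₁},…,C_{β_K} ∈ ℝ`, with `L w`
measurable and integrable for `w ∈ X` and the infimum of `α ↦ F_{β_k}(w,α)` attained.
If `(w*, C*)` is optimal for Problem A (minimize `C` over `(w,C) ∈ X × ℝ` s.t.
`min_{α_k} F_{β_k}(w,α_k) ≤ C + C_{β_k}` for all `k`) and each `α*_k` is a minimizer of
`α ↦ F_{β_k}(w*,α)`, then `(w*, C*, α*)` is optimal for Problem B (minimize `C` over
`(w,C,α) ∈ X × ℝ × ℝ^K` s.t. `F_{β_k}(w,α_k) ≤ C + C_{β_k}` for all `k`). -/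
theorem stmt_10 {n K : ℕ} (μ : Measure (Fin n → ℝ)) [IsProbabilityMeasure μ]
    (L : (Fin n → ℝ) → (Fin n → ℝ) → ℝ) (X : Set (Fin n → ℝ))
    (β : Fin K → ℝ) (hβ : ∀ k, β k ∈ Set.Ioo (0 : ℝ) 1)
    (Cβ : Fin K → ℝ)
    (hmeas : ∀ w ∈ X, Measurable (L w)) (hint : ∀ w ∈ X, Integrable (L w) μ)
    (F : Fin K → (Fin n → ℝ) → ℝ → ℝ)
    (hF : ∀ k w a, F k w a = a + (1 - β k)⁻¹ * ∫ r, max (L w r - a) 0 ∂μ)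
    (hattain : ∀ w ∈ X, ∀ k, ∃ a : ℝ, ∀ a' : ℝ, F k w a ≤ F k w a')
    (wstar : Fin n → ℝ) (Cstar : ℝ) (αstar : Fin K → ℝ)
    (hfeasA : wstar ∈ X ∧ ∀ k, (⨅ a : ℝ, F k wstar a) ≤ Cstar + Cβ k)
    (hoptA : ∀ (w : Fin n → ℝ) (C : ℝ),
      (w ∈ X ∧ ∀ k, (⨅ a : ℝ, F k w a) ≤ C + Cβ k) → Cstar ≤ C)
    (hargmin : ∀ k, ∀ a : ℝ, F k wstar (αstar k) ≤ F k wstar a) :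
    (wstar ∈ X ∧ ∀ k, F k wstar (αstar k) ≤ Cstar + Cβ k) ∧
    ∀ (w : Fin n → ℝ) (C : ℝ) (α : Fin K → ℝ),
      (w ∈ X ∧ ∀ k, F k w (α k) ≤ C + Cβ k) → Cstar ≤ C := by
  constructor
  · refine ⟨hfeasA.1, fun k => ?_⟩
    exact le_trans (le_ciInf (hargmin k)) (hfeasA.2 k)
  · rintro w C α ⟨hw, hfeas⟩
    refine hoptA w C ⟨hw, fun k => ?_⟩
    obtain ⟨a0, ha0⟩ := hattain w hw k
    exact le_trans (ciInf_le ⟨F k w a0, by rintro x ⟨a, rfl⟩; exact ha0 a⟩ (α k)) (hfeas k)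
end

section
/- Let X ⊆ ℝⁿ, let β₁,…,β_K ∈ (0,1), let C_{β₁},…,C_{β_K} ∈ ℝ, and suppose for every w ∈ X and each k that L(w,·) is measurable and μ-integrable and that the infimum of α ↦ F_{β_k}(w,α) is attained. If (w**, C**, α**) is an optimal solution of Problem B (minimize C over (w, C, α) ∈ X × ℝ × ℝ^K subject to F_{β_k}(w, α_k) ≤ C + C_{β_k} for k = 1,…,K), then (w**, C**) is an optimal solution of Problem A (minimize C over (w,C) ∈ X × ℝ subject to min_{α_k} F_{β_k}(w, α_k) ≤ C + C_{β_k} for k = 1,…,K). -/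
open MeasureTheory

/-- Let `X ⊆ ℝⁿ`, `β₁,…,β_K ∈ (0,1)`, `C_{β₁},…,C_{β_K} ∈ ℝ`, with `L w`
measurable and integrable for `w ∈ X` and the infimum of `α ↦ F_{β_k}(w,α)` attained.
If `(w**, C**, α**)` is optimal for Problem B (minimize `C` over `(w,C,α) ∈ X × ℝ × ℝ^K`
s.t. `F_{β_k}(w,α_k) ≤ C + C_{β_k}` for all `k`), then `(w**, C**)` is optimal for
Problem A (minimize `C` over `(w,C) ∈ X × ℝ` s.t. `min_{α_k} F_{β_k}(w,α_k) ≤ C + C_{β_k}`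
for all `k`). -/
theorem stmt_11 {n K : ℕ} (μ : Measure (Fin n → ℝ)) [IsProbabilityMeasure μ]
    (L : (Fin n → ℝ) → (Fin n → ℝ) → ℝ) (X : Set (Fin n → ℝ))
    (β : Fin K → ℝ) (hβ : ∀ k, β k ∈ Set.Ioo (0 : ℝ) 1)
    (Cβ : Fin K → ℝ)
    (hmeas : ∀ w ∈ X, Measurable (L w)) (hint : ∀ w ∈ X, Integrable (L w) μ)
    (F : Fin K → (Fin n → ℝ) → ℝ → ℝ)
    (hF : ∀ k w a, F k w a = a + (1 - β k)⁻¹ * ∫ r, max (L w r - a) 0 ∂μ)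
    (hattain : ∀ w ∈ X, ∀ k, ∃ a : ℝ, ∀ a' : ℝ, F k w a ≤ F k w a')
    (wss : Fin n → ℝ) (Css : ℝ) (αss : Fin K → ℝ)
    (hfeasB : wss ∈ X ∧ ∀ k, F k wss (αss k) ≤ Css + Cβ k)
    (hoptB : ∀ (w : Fin n → ℝ) (C : ℝ) (α : Fin K → ℝ),
      (w ∈ X ∧ ∀ k, F k w (α k) ≤ C + Cβ k) → Css ≤ C) :
    (wss ∈ X ∧ ∀ k, (⨅ a : ℝ, F k wss a) ≤ Css + Cβ k) ∧
    ∀ (w : Fin n → ℝ) (C : ℝ),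
      (w ∈ X ∧ ∀ k, (⨅ a : ℝ, F k w a) ≤ C + Cβ k) → Css ≤ C := by
  obtain ⟨hwX, hfeas⟩ := hfeasB
  constructor
  · refine ⟨hwX, fun k => ?_⟩
    obtain ⟨a0, ha0⟩ := hattain wss hwX k
    exact le_trans (ciInf_le ⟨F k wss a0, by rintro _ ⟨a', rfl⟩; exact ha0 a'⟩ (αss k)) (hfeas k)
  · intro w C hC
    obtain ⟨hw, hCk⟩ := hC
    choose a ha using fun k => hattain w hw k
    refine hoptB w C a ⟨hw, fun k => ?_⟩
    have : F k w (a k) = ⨅ a' : ℝ, F k w a' := by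
      refine le_antisymm (le_ciInf (ha k)) (ciInf_le ⟨F k w (a k), ?_⟩ (a k))
      rintro _ ⟨a', rfl⟩; exact ha k a'
    exact this ▸ hCk k
end
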